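/- arXiv:2103.05478 — 2 statements merged into one kernel-verified Lean document; each statement's English description precedes it below -/
import Mathlib

section
/- Let f : D ⊆ ℝⁿ → ℝ be real-analytic on the open set D and admit a holomorphic extension F to D × (−δ̄, δ̄)ⁿ ⊆ ℂⁿ, and define f_δ(x) := E_{v ∼ Unif(𝔹ⁿ)}[Re(F(x + iδv))]. Then for every x ∈ D, the gradient of the smoothed function converges to the true gradient as the smoothing vanishes: lim_{δ → 0+} ∇f_δ(x) = ∇f(x). -/
/-!
Differentiating under the integral sign, `∇f_δ(x)` is the average over the unit ball of the
partial derivative in `a` of `(a, b) ↦ Re F(a + ib)` at `(x, δv)`; this map is `C¹` on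
`D × B(0, δ̄)` because `F` is holomorphic there. As `δ → 0` the points `(x, δv)` collapse to
`(x, 0)`, where the partial derivative is `∇f(x)` since `Re F(a + i0) = f(a)` near `x`. Both the
differentiation and the limit only need an integrand that is continuous on an open neighbourhood
of `{x} × K` with `K` compact: the tube lemma then gives the uniform bound for dominated
convergence.
-/

open MeasureTheory Filter

/-- The embedding `(x, y) ↦ x + i y` of two real vectors into `ℂⁿ`. -/
noncomputable def embc {n : ℕ} (x y : EuclideanSpace ℝ (Fin n)) : EuclideanSpace ℂ (Fin n) :=
  WithLp.toLp 2 (fun j => ⟨x j, y j⟩)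

/-- The set `D × (−δ̄, δ̄)ⁿ = {x + iy : x ∈ D, y ∈ (−δ̄, δ̄)ⁿ} ⊆ ℂⁿ`. -/
def complexStrip {n : ℕ} (D : Set (EuclideanSpace ℝ (Fin n))) (δbar : ℝ) :
    Set (EuclideanSpace ℂ (Fin n)) :=
  {z | (WithLp.toLp 2 (fun j => (z j).re) : EuclideanSpace ℝ (Fin n)) ∈ D ∧ ∀ j, |(z j).im| < δbar}

/-- The complex-step smoothing `f_δ(x) = E_{v ∼ Unif(𝔹ⁿ)}[Re (F (x + iδv))]`. -/
noncomputable def fdelta {n : ℕ} (F : EuclideanSpace ℂ (Fin n) → ℂ) (δ : ℝ)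
    (x : EuclideanSpace ℝ (Fin n)) : ℝ :=
  (volume (Metric.closedBall (0 : EuclideanSpace ℝ (Fin n)) 1)).toReal⁻¹ *
    ∫ v in Metric.closedBall (0 : EuclideanSpace ℝ (Fin n)) 1, (F (embc x (δ • v))).re

open Metric Topology

section ParametricIntegral

variable {X P E : Type*} [TopologicalSpace X] [TopologicalSpace P] [NormedAddCommGroup E]
  {K : Set P}

theorem IsCompact.exists_bound_near_of_continuousOn_prod {U : Set (X × P)} {x : X}
    {H : X × P → E} (hK : IsCompact K)
    (hH : ContinuousOn H U) (hU : IsOpen U) (hxK : {x} ×ˢ K ⊆ U) :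
    ∃ C, ∀ᶠ y in 𝓝 x, ∀ v ∈ K, (y, v) ∈ U ∧ ‖H (y, v)‖ ≤ C := by
  obtain ⟨C, hC⟩ := (isCompact_singleton.prod hK).exists_bound_of_continuousOn (hH.mono hxK)
  have hW : IsOpen (U ∩ H ⁻¹' ball 0 (C + 1)) := hH.isOpen_inter_preimage hU isOpen_ball
  have hxKW : {x} ×ˢ K ⊆ U ∩ H ⁻¹' ball 0 (C + 1) := fun p hp =>
    ⟨hxK hp, mem_ball_zero_iff.2 ((hC p hp).trans_lt (lt_add_one C))⟩
  obtain ⟨s, t, hs, -, hxs, hKt, hst⟩ := generalized_tube_lemma isCompact_singleton hK hW hxKW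
  refine ⟨C + 1, Filter.mem_of_superset (hs.mem_nhds (hxs rfl)) fun y hy v hv => ?_⟩
  obtain ⟨hU, hball⟩ := hst (Set.mk_mem_prod hy (hKt hv))
  exact ⟨hU, (mem_ball_zero_iff.1 hball).le⟩

variable [MeasurableSpace P] [OpensMeasurableSpace P] [T2Space P] {μ : Measure P}
  [IsFiniteMeasureOnCompacts μ]

theorem continuousAt_setIntegral_of_continuousOn_prod [NormedSpace ℝ E]
    [FirstCountableTopology X] {U : Set (X × P)} {x : X} {H : X × P → E} (hK : IsCompact K)
    (hH : ContinuousOn H U) (hU : IsOpen U) (hxK : {x} ×ˢ K ⊆ U) :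
    ContinuousAt (fun y => ∫ v in K, H (y, v) ∂μ) x := by
  obtain ⟨C, hC⟩ := hK.exists_bound_near_of_continuousOn_prod hH hU hxK
  refine continuousAt_of_dominated (bound := fun _ => C) ?_ ?_
    (integrableOn_const hK.measure_lt_top.ne) ?_
  · filter_upwards [hC] with y hy
    exact (hH.comp (Continuous.prodMk_right y).continuousOn fun v hv => (hy v hv).1)
      |>.aestronglyMeasurable_of_isCompact hK hK.measurableSet
  · filter_upwards [hC] with y hy
    exact (ae_restrict_iff' hK.measurableSet).2 (Eventually.of_forall fun v hv => (hy v hv).2)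
  · refine (ae_restrict_iff' hK.measurableSet).2 (Eventually.of_forall fun v hv => ?_)
    exact (hH.continuousAt (hU.mem_nhds (hxK (Set.mk_mem_prod rfl hv)))).comp
      (Continuous.prodMk_left v).continuousAt (x := x)

theorem hasFDerivAt_setIntegral_of_continuousOn_prod [NormedSpace ℝ E] {E' : Type*}
    [NormedAddCommGroup E'] [NormedSpace ℝ E'] {U : Set (E' × P)} {x : E'}
    {G : E' × P → E} {G' : E' × P → E' →L[ℝ] E} (hK : IsCompact K)
    (hG : ContinuousOn G U) (hG' : ContinuousOn G' U) (hU : IsOpen U) (hxK : {x} ×ˢ K ⊆ U)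
    (hdiff : ∀ p ∈ U, HasFDerivAt (fun y => G (y, p.2)) (G' p) p.1) :
    HasFDerivAt (fun y => ∫ v in K, G (y, v) ∂μ) (∫ v in K, G' (x, v) ∂μ) x := by
  obtain ⟨C, hC⟩ := hK.exists_bound_near_of_continuousOn_prod hG' hU hxK
  obtain ⟨s, hs, hCs⟩ := hC.exists_mem
  have hxK' : ∀ v ∈ K, (x, v) ∈ U := fun v hv => hxK (Set.mk_mem_prod rfl hv)
  obtain ⟨ε, hε, hεs⟩ := Metric.mem_nhds_iff.1 hs
  refine hasFDerivAt_integral_of_dominated_of_fderiv_le (F' := fun y v => G' (y, v))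
    (bound := fun _ => C) (ball_mem_nhds x hε) ?_ ?_ ?_ ?_
    (integrableOn_const (μ := μ) hK.measure_lt_top.ne) ?_
  · filter_upwards [hs] with y hy
    exact (hG.comp (Continuous.prodMk_right y).continuousOn fun v hv => (hCs y hy v hv).1)
      |>.aestronglyMeasurable_of_isCompact hK hK.measurableSet
  · exact (hG.comp (Continuous.prodMk_right x).continuousOn hxK').integrableOn_compact hK
  · exact (hG'.comp (Continuous.prodMk_right x).continuousOn hxK')
      |>.aestronglyMeasurable_of_isCompact hK hK.measurableSet
  · exact (ae_restrict_iff' hK.measurableSet).2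
      (Eventually.of_forall fun v hv y hy => (hCs y (hεs hy) v hv).2)
  · exact (ae_restrict_iff' hK.measurableSet).2
      (Eventually.of_forall fun v hv y hy => hdiff (y, v) (hCs y (hεs hy) v hv).1)

theorem tendsto_setIntegral_comp_smul_nhds_zero [NormedSpace ℝ E] [CompleteSpace E]
    [AddCommGroup P] [Module ℝ P] [ContinuousSMul ℝ P] {ψ : P → E} {V : Set P} (hK : IsCompact K)
    (hψ : ContinuousOn ψ V) (hV : IsOpen V) (h0 : (0 : P) ∈ V) :
    Tendsto (fun δ : ℝ => ∫ v in K, ψ (δ • v) ∂μ) (𝓝 0) (𝓝 (μ.real K • ψ 0)) := by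
  have hsmul : Continuous fun q : ℝ × P => q.1 • q.2 := continuous_smul
  have hcont := continuousAt_setIntegral_of_continuousOn_prod (μ := μ) hK
    (hψ.comp hsmul.continuousOn (Set.mapsTo_preimage _ V)) (hV.preimage hsmul)
    (x := 0) fun q ⟨hq, _⟩ => by
      change q.1 • q.2 ∈ V
      rwa [Set.mem_singleton_iff.1 hq, zero_smul]
  have hlim := hcont.tendsto
  simp only [Function.comp_apply, zero_smul] at hlim
  rwa [setIntegral_const] at hlim

end ParametricIntegral

theorem DifferentiableAt.hasFDerivAt_comp_prodMk_left {𝕜 E P G : Type*}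
    [NontriviallyNormedField 𝕜] [NormedAddCommGroup E] [NormedSpace 𝕜 E] [NormedAddCommGroup P]
    [NormedSpace 𝕜 P] [NormedAddCommGroup G] [NormedSpace 𝕜 G] {φ : E × P → G} {p : E × P}
    (h : DifferentiableAt 𝕜 φ p) :
    HasFDerivAt (fun y => φ (y, p.2)) (fderiv 𝕜 φ p ∘L ContinuousLinearMap.inl 𝕜 E P) p.1 :=
  h.hasFDerivAt.comp p.1 (hasFDerivAt_prodMk_left p.1 p.2)

section ComplexStep

variable {n : ℕ}

local notation "ℝⁿ" => EuclideanSpace ℝ (Fin n)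
local notation "ℂⁿ" => EuclideanSpace ℂ (Fin n)

noncomputable def embcCLM : (ℝⁿ × ℝⁿ) →L[ℝ] ℂⁿ :=
  LinearMap.toContinuousLinearMap
    { toFun := fun p => embc p.1 p.2
      map_add' := fun p q => by ext j; apply Complex.ext <;> simp [embc]
      map_smul' := fun c p => by ext j; apply Complex.ext <;> simp [embc] }

theorem embc_mem_complexStrip {D : Set ℝⁿ} {δbar : ℝ} {a b : ℝⁿ} (ha : a ∈ D)
    (hb : ‖b‖ < δbar) : embc a b ∈ complexStrip D δbar :=
  ⟨ha, fun j => (PiLp.norm_apply_le b j).trans_lt hb⟩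

noncomputable def reEmbc (F : ℂⁿ → ℂ) (p : ℝⁿ × ℝⁿ) : ℝ := (F (embc p.1 p.2)).re

theorem contDiffOn_reEmbc {F : ℂⁿ → ℂ} {D : Set ℝⁿ} {δbar : ℝ}
    (hF : AnalyticOnNhd ℂ F (complexStrip D δbar)) :
    ContDiffOn ℝ 1 (reEmbc F) (D ×ˢ ball 0 δbar) := by
  have hmaps : Set.MapsTo embcCLM (D ×ˢ ball 0 δbar) (complexStrip D δbar) :=
    fun p hp => embc_mem_complexStrip hp.1 (mem_ball_zero_iff.1 hp.2)
  exact Complex.reCLM.contDiff.comp_contDiffOn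
    ((hF.contDiffOn_of_completeSpace.restrict_scalars ℝ).comp embcCLM.contDiff.contDiffOn hmaps)

theorem hasFDerivAt_reEmbc_fst {F : ℂⁿ → ℂ} {D : Set ℝⁿ} {δbar : ℝ} (hD : IsOpen D)
    (hF : AnalyticOnNhd ℂ F (complexStrip D δbar)) {p : ℝⁿ × ℝⁿ} (hp : p ∈ D ×ˢ ball 0 δbar) :
    HasFDerivAt (fun y => reEmbc F (y, p.2))
      (fderiv ℝ (reEmbc F) p ∘L ContinuousLinearMap.inl ℝ ℝⁿ ℝⁿ) p.1 :=
  ((contDiffOn_reEmbc hF).differentiableOn one_ne_zero p hp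
    |>.differentiableAt ((hD.prod isOpen_ball).mem_nhds hp)).hasFDerivAt_comp_prodMk_left

theorem hasFDerivAt_fdelta {F : ℂⁿ → ℂ} {D : Set ℝⁿ} {δbar : ℝ} {x : ℝⁿ} (hD : IsOpen D)
    (hF : AnalyticOnNhd ℂ F (complexStrip D δbar)) (hx : x ∈ D) {δ : ℝ} (hδ : |δ| < δbar) :
    HasFDerivAt (fdelta F δ) ((volume.real (closedBall (0 : ℝⁿ) 1))⁻¹ •
      ∫ v in closedBall (0 : ℝⁿ) 1,
        fderiv ℝ (reEmbc F) (x, δ • v) ∘L ContinuousLinearMap.inl ℝ ℝⁿ ℝⁿ) x := by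
  set U := D ×ˢ ball (0 : ℝⁿ) δbar
  have hU : IsOpen U := hD.prod isOpen_ball
  have hφ := contDiffOn_reEmbc hF
  set g : ℝⁿ × ℝⁿ → ℝⁿ × ℝⁿ := fun q => (q.1, δ • q.2)
  have hg : Continuous g := by fun_prop
  have hmaps : Set.MapsTo g (g ⁻¹' U) U := Set.mapsTo_preimage g U
  have hxB : {x} ×ˢ closedBall 0 1 ⊆ g ⁻¹' U := by
    rintro ⟨y, v⟩ ⟨rfl, hv⟩
    refine ⟨hx, mem_ball_zero_iff.2 ?_⟩
    calc ‖δ • v‖ = |δ| * ‖v‖ := norm_smul δ v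
      _ ≤ |δ| := mul_le_of_le_one_right (abs_nonneg δ) (mem_closedBall_zero_iff.1 hv)
      _ < δbar := hδ
  exact (hasFDerivAt_setIntegral_of_continuousOn_prod (isCompact_closedBall 0 1)
    (hφ.continuousOn.comp hg.continuousOn hmaps)
    (((hφ.continuousOn_fderiv_of_isOpen hU le_rfl).comp hg.continuousOn hmaps).clm_comp
      continuousOn_const) (hU.preimage hg) hxB
    fun q hq => hasFDerivAt_reEmbc_fst hD hF hq).const_mul _

theorem tendsto_fderiv_fdelta {F : ℂⁿ → ℂ} {D : Set ℝⁿ} {δbar : ℝ} {x : ℝⁿ} (hD : IsOpen D)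
    (hδ0 : 0 < δbar) (hF : AnalyticOnNhd ℂ F (complexStrip D δbar)) {f : ℝⁿ → ℝ}
    (hFf : ∀ x ∈ D, F (embc x 0) = (f x : ℂ)) (hx : x ∈ D) :
    Tendsto (fun δ => fderiv ℝ (fdelta F δ) x) (𝓝[>] 0) (𝓝 (fderiv ℝ f x)) := by
  set B := closedBall (0 : ℝⁿ) 1
  set U := D ×ˢ ball (0 : ℝⁿ) δbar
  have hU : IsOpen U := hD.prod isOpen_ball
  have hφ := contDiffOn_reEmbc hF
  set φ' : ℝⁿ → ℝⁿ →L[ℝ] ℝ := fun w =>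
    fderiv ℝ (reEmbc F) (x, w) ∘L ContinuousLinearMap.inl ℝ ℝⁿ ℝⁿ
  have hφ' : ContinuousOn φ' (ball 0 δbar) :=
    ((hφ.continuousOn_fderiv_of_isOpen hU le_rfl).comp (Continuous.prodMk_right x).continuousOn
      fun w hw => ⟨hx, hw⟩).clm_comp continuousOn_const
  have hf : HasFDerivAt f (φ' 0) x := by
    have hx0 : (x, 0) ∈ U := ⟨hx, mem_ball_self hδ0⟩
    refine (hasFDerivAt_reEmbc_fst hD hF hx0).congr_of_eventuallyEq ?_
    filter_upwards [hD.mem_nhds hx] with y hy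
    simp [reEmbc, hFf y hy]
  have hc : volume.real B ≠ 0 := ENNReal.toReal_ne_zero.2
    ⟨(measure_closedBall_pos _ _ one_pos).ne', measure_closedBall_lt_top.ne⟩
  have hlim : Tendsto (fun δ : ℝ => (volume.real B)⁻¹ • ∫ v in B, φ' (δ • v)) (𝓝 0)
      (𝓝 (φ' 0)) := by
    have := (tendsto_setIntegral_comp_smul_nhds_zero (μ := volume) (isCompact_closedBall 0 1)
      hφ' isOpen_ball (mem_ball_self hδ0)).const_smul (volume.real B)⁻¹
    rwa [smul_smul, inv_mul_cancel₀ hc, one_smul] at this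
  rw [hf.fderiv]
  refine (hlim.mono_left nhdsWithin_le_nhds).congr' ?_
  filter_upwards [Ioo_mem_nhdsGT hδ0] with δ hδ
  exact (hasFDerivAt_fdelta hD hF hx (abs_lt.2 ⟨by linarith [hδ.1], hδ.2⟩)).fderiv.symm

end ComplexStep

theorem fdelta_gradient_tendsto_general
    (n : ℕ) (D : Set (EuclideanSpace ℝ (Fin n))) (hD : IsOpen D)
    (f : EuclideanSpace ℝ (Fin n) → ℝ)
    (δbar : ℝ) (hδ0 : 0 < δbar)
    (F : EuclideanSpace ℂ (Fin n) → ℂ)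
    (hF : AnalyticOnNhd ℂ F (complexStrip D δbar))
    (hFf : ∀ x ∈ D, F (embc x 0) = (f x : ℂ)) :
    ∀ x ∈ D,
      Tendsto (fun δ : ℝ => gradient (fdelta F δ) x) (nhdsWithin 0 (Set.Ioi 0))
        (nhds (gradient f x)) := fun _ hx =>
  ((InnerProductSpace.toDual ℝ _).symm.continuous.tendsto _).comp
    (tendsto_fderiv_fdelta hD hδ0 hF hFf hx)

/-- consistency of the smoothed gradient. If `f` is real-analytic on the
open set `D` and admits a holomorphic extension `F` to `D × (−δ̄, δ̄)ⁿ`, then for every `x ∈ D`,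
`∇f_δ(x) → ∇f(x)` as `δ → 0⁺`. -/
theorem fdelta_gradient_tendsto
    (n : ℕ) (D : Set (EuclideanSpace ℝ (Fin n))) (hD : IsOpen D)
    (f : EuclideanSpace ℝ (Fin n) → ℝ) (hf : AnalyticOnNhd ℝ f D)
    (δbar : ℝ) (hδ0 : 0 < δbar)
    (F : EuclideanSpace ℂ (Fin n) → ℂ)
    (hF : AnalyticOnNhd ℂ F (complexStrip D δbar))
    (hFf : ∀ x ∈ D, F (embc x 0) = (f x : ℂ)) :
    ∀ x ∈ D,
      Tendsto (fun δ : ℝ => gradient (fdelta F δ) x) (nhdsWithin 0 (Set.Ioi 0))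
        (nhds (gradient f x)) :=
  fdelta_gradient_tendsto_general n D hD f δbar hδ0 F hF hFf
end

section
/- Let m ∈ {0, 1}, let (t_K)_{K ≥ 0} be a sequence of non-negative reals, let (T_K)_{K ≥ 0} be a non-decreasing sequence with T₀ ≥ t₀², and let ν_k ≥ 0 for all k ≥ 0. Suppose that for every K ≥ 0 the recursion t_K² ≤ T_K + Σ_{k=0}^{K−m} ν_k t_k holds. Then for every K ≥ 0: t_K ≤ (1/2) Σ_{k=0}^{K−m} ν_k + ( T_K + ((1/2) Σ_{k=0}^{K−m} ν_k)² )^{1/2}. -/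
/-- recursion inequality, Schmidt–Le Roux–Bach. Let `m ∈ {0, 1}`, let
`(t_K)` be non-negative, `(T_K)` non-decreasing with `T₀ ≥ t₀²`, and `ν_k ≥ 0`. If
`t_K² ≤ T_K + Σ_{k=0}^{K−m} ν_k t_k` for all `K ≥ 0`, then for all `K ≥ 0`,
`t_K ≤ (1/2) Σ_{k=0}^{K−m} ν_k + (T_K + ((1/2) Σ_{k=0}^{K−m} ν_k)²)^{1/2}`.
(The sum `Σ_{k=0}^{K−m}` has `K + 1 − m` terms; it is empty when `m = 1`, `K = 0`.) -/
theorem recursion_inequality_bound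
    (m : ℕ) (hm : m ≤ 1)
    (t T ν : ℕ → ℝ)
    (ht : ∀ k, 0 ≤ t k) (hν : ∀ k, 0 ≤ ν k)
    (hT : Monotone T) (hT0 : t 0 ^ 2 ≤ T 0)
    (hrec : ∀ K : ℕ, t K ^ 2 ≤ T K + ∑ k ∈ Finset.range (K + 1 - m), ν k * t k) :
    ∀ K : ℕ, t K ≤ (1 / 2) * (∑ k ∈ Finset.range (K + 1 - m), ν k)
      + Real.sqrt (T K + ((1 / 2) * ∑ k ∈ Finset.range (K + 1 - m), ν k) ^ 2) := by
  intro K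
  set S := ∑ k ∈ Finset.range (K + 1 - m), ν k with hS
  have hS0 : 0 ≤ S := Finset.sum_nonneg fun k _ => hν k
  have hne : (Finset.range (K + 1)).Nonempty := ⟨0, by simp⟩
  set u := (Finset.range (K + 1)).sup' hne t with hu
  obtain ⟨k0, hk0mem, hk0⟩ := Finset.exists_mem_eq_sup' hne t
  have hk0K : k0 ≤ K := Nat.lt_succ_iff.mp (Finset.mem_range.mp hk0mem)
  have htu : ∀ j ≤ K, t j ≤ u := fun j hj =>
    Finset.le_sup' t (Finset.mem_range.mpr (Nat.lt_succ_of_le hj))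
  have hu0 : 0 ≤ u := le_trans (ht 0) (htu 0 (Nat.zero_le K))
  have hTK0 : 0 ≤ T K := le_trans (le_trans (sq_nonneg (t 0)) hT0) (hT (Nat.zero_le K))
  have hquad : u ^ 2 ≤ T K + S * u := by
    have hk0' : u = t k0 := hk0
    calc u ^ 2 = t k0 ^ 2 := by rw [hk0']
      _ ≤ T k0 + ∑ j ∈ Finset.range (k0 + 1 - m), ν j * t j := hrec k0
      _ ≤ T K + S * u := by
          refine add_le_add (hT hk0K) ?_
          rw [hS, Finset.sum_mul]
          calc ∑ j ∈ Finset.range (k0 + 1 - m), ν j * t j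
              ≤ ∑ j ∈ Finset.range (K + 1 - m), ν j * t j :=
                Finset.sum_le_sum_of_subset_of_nonneg
                  (Finset.range_subset_range.mpr (by omega))
                  (fun j _ _ => mul_nonneg (hν j) (ht j))
            _ ≤ ∑ j ∈ Finset.range (K + 1 - m), ν j * u := by
                refine Finset.sum_le_sum fun j hj => ?_
                have : j ≤ K := by
                  have := Finset.mem_range.mp hj; omega
                exact mul_le_mul_of_nonneg_left (htu j this) (hν j)
  have hsq : (u - (1 / 2) * S) ^ 2 ≤ T K + ((1 / 2) * S) ^ 2 := by nlinarith
  have h1 : u - (1 / 2) * S ≤ Real.sqrt (T K + ((1 / 2) * S) ^ 2) := by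
    calc u - (1 / 2) * S ≤ |u - (1 / 2) * S| := le_abs_self _
      _ = Real.sqrt ((u - (1 / 2) * S) ^ 2) := (Real.sqrt_sq_eq_abs _).symm
      _ ≤ Real.sqrt (T K + ((1 / 2) * S) ^ 2) := Real.sqrt_le_sqrt hsq
  have : t K ≤ u := htu K le_rfl
  linarith
end
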